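/- arXiv:0809.1691 — 2 statements merged into one kernel-verified Lean document; each statement's English description precedes it below -/
import Mathlib

section
/- If n = a_0 + a_1 p + ... + a_k p^k is the base-p expansion of n, then L_p(n) = ∑_{j=0}^{k} ∑_{l=1}^{a_j} λ_p(l). -/
/-!
Off the multiples of `p`, `λ_p` is the Legendre symbol, and `λ_p(pk) = λ_p(k)`; hence
`L_p(n) = ∑_{m ≤ n} (m/p) + L_p(⌊n/p⌋)`. The Legendre symbol is `p`-periodic with zero sum over
a period, so its partial sum up to `n` equals the one up to `n mod p < p`, where it agrees with
`L_p`. Thus `L_p(n) = L_p(⌊n/p⌋) + L_p(n mod p)`, and iterating along the base-`p` digits gives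
the formula.
-/

open Finset

theorem ZMod.sum_range_natCast {M : Type*} [AddCommMonoid M] (n : ℕ) [NeZero n]
    (F : ZMod n → M) : ∑ i ∈ range n, F i = ∑ x : ZMod n, F x :=
  sum_nbij' (fun i => i) ZMod.val (fun _ _ => mem_univ _)
    (fun x _ => mem_range.mpr x.val_lt)
    (fun _ hi => ZMod.val_cast_of_lt (mem_range.mp hi)) (fun x _ => ZMod.natCast_zmod_val x)
    (fun _ _ => rfl)

theorem Function.Periodic.sum_range_eq_sum_range_mod {M : Type*} [AddCommMonoid M]
    {g : ℕ → M} {p : ℕ} (hg : Function.Periodic g p) (hzero : ∑ i ∈ range p, g i = 0)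
    (n : ℕ) : ∑ i ∈ range n, g i = ∑ i ∈ range (n % p), g i := by
  suffices h : ∀ q r, ∑ i ∈ range (p * q + r), g i = ∑ i ∈ range r, g i by
    conv_lhs => rw [← Nat.div_add_mod n p]
    exact h _ _
  intro q r
  induction q with
  | zero => simp
  | succ q ih =>
    rw [mul_add_one, add_comm (p * q), add_assoc, sum_range_add, hzero, zero_add, ← ih]
    exact sum_congr rfl fun i _ => by rw [add_comm, hg]

theorem Finset.sum_Icc_one_eq_sum_range {M : Type*} [AddCommMonoid M] (g : ℕ → M) (n : ℕ) :
    ∑ m ∈ Icc 1 n, g m = ∑ i ∈ range n, g (i + 1) := by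
  rw [range_eq_Ico, sum_Ico_add', zero_add, Ico_add_one_right_eq_Icc]

theorem Function.Periodic.sum_Icc_one_eq_sum_Icc_one_mod {M : Type*} [AddCommMonoid M]
    {g : ℕ → M} {p : ℕ} (hg : Function.Periodic g p) (hzero : ∑ m ∈ Icc 1 p, g m = 0)
    (n : ℕ) : ∑ m ∈ Icc 1 n, g m = ∑ m ∈ Icc 1 (n % p), g m := by
  simp only [sum_Icc_one_eq_sum_range] at hzero ⊢
  exact (hg.add_const 1).sum_range_eq_sum_range_mod hzero n

theorem Finset.sum_Icc_one_ite_dvd {M : Type*} [AddCommMonoid M] (g : ℕ → M) (p n : ℕ) :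
    ∑ m ∈ Icc 1 n, (if p ∣ m then g (m / p) else 0) = ∑ k ∈ Icc 1 (n / p), g k := by
  induction n with
  | zero => simp
  | succ n ih =>
    rw [sum_Icc_succ_top (Nat.le_add_left 1 n), ih, Nat.succ_div]
    split_ifs with h
    · rw [sum_Icc_succ_top (Nat.le_add_left 1 _)]
    · simp

namespace legendreSym

variable (p : ℕ) [Fact p.Prime]

theorem periodic_natCast : Function.Periodic (fun m : ℕ => legendreSym p m) p := fun m => by
  simp [legendreSym]

theorem sum_Icc_one_eq_zero (hp : p ≠ 2) : ∑ m ∈ Icc 1 p, legendreSym p m = 0 := by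
  have hchar : ringChar (ZMod p) ≠ 2 := by rwa [ZMod.ringChar_zmod_n]
  calc ∑ m ∈ Icc 1 p, legendreSym p m
      = ∑ i ∈ range p, quadraticChar (ZMod p) (i + 1 : ℕ) := by
        simp [sum_Icc_one_eq_sum_range, legendreSym]
    _ = ∑ x : ZMod p, quadraticChar (ZMod p) (x + 1) := by
        simpa using ZMod.sum_range_natCast p fun x => quadraticChar (ZMod p) (x + 1)
    _ = ∑ x : ZMod p, quadraticChar (ZMod p) x :=
        Fintype.sum_equiv (Equiv.addRight 1) _ _ fun _ => rfl
    _ = 0 := quadraticChar_sum_zero hchar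

theorem sum_Icc_one_eq_sum_Icc_one_mod (hp : p ≠ 2) (n : ℕ) :
    ∑ m ∈ Icc 1 n, legendreSym p m = ∑ m ∈ Icc 1 (n % p), legendreSym p m :=
  (periodic_natCast p).sum_Icc_one_eq_sum_Icc_one_mod (sum_Icc_one_eq_zero p hp) n

end legendreSym

theorem Nat.eq_sum_map_digits_of_eq_div_add_mod {M : Type*} [AddCommMonoid M] {b : ℕ}
    (hb : 1 < b) {L g : ℕ → M} (h0 : L 0 = 0) (h : ∀ n, L n = L (n / b) + g (n % b))
    (n : ℕ) : L n = ((Nat.digits b n).map g).sum := by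
  induction n using Nat.strong_induction_on with
  | _ n ih =>
    rcases Nat.eq_zero_or_pos n with rfl | hn
    · simp [h0]
    · rw [Nat.digits_def' hb hn, List.map_cons, List.sum_cons, h n, add_comm,
        ih (n / b) (Nat.div_lt_self hn hb)]

section CompletelyMultiplicative

variable {p : ℕ} [Fact p.Prime] {f : ℕ → ℤ}

theorem eq_legendreSym_of_not_dvd (hf1 : f 1 = 1) (hfmul : ∀ m n, f (m * n) = f m * f n)
    (hfq : ∀ q : ℕ, q.Prime → q ≠ p → f q = legendreSym p q) {m : ℕ} (hm : ¬p ∣ m) :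
    f m = legendreSym p m := by
  induction m using Nat.recOnMul with
  | zero => exact absurd (dvd_zero p) hm
  | one => simp [hf1]
  | prime q hq => exact hfq q hq fun h => hm (h ▸ dvd_rfl)
  | mul a b ha hb =>
    rw [hfmul, ha fun h => hm (h.mul_right b), hb fun h => hm (h.mul_left a), Nat.cast_mul,
      legendreSym.mul]

theorem eq_legendreSym_add_ite_dvd (hf1 : f 1 = 1) (hfmul : ∀ m n, f (m * n) = f m * f n)
    (hfp : f p = 1) (hfq : ∀ q : ℕ, q.Prime → q ≠ p → f q = legendreSym p q) (m : ℕ) :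
    f m = legendreSym p m + if p ∣ m then f (m / p) else 0 := by
  split_ifs with hm
  · obtain ⟨k, rfl⟩ := hm
    rw [hfmul, hfp, one_mul, Nat.mul_div_cancel_left k (Fact.out : p.Prime).pos, Nat.cast_mul,
      legendreSym.mul, legendreSym.eq_zero_iff _ _ |>.mpr (by simp), zero_mul, zero_add]
  · rw [eq_legendreSym_of_not_dvd hf1 hfmul hfq hm, add_zero]

theorem sum_Icc_one_eq_sum_div_add_sum_mod (hodd : p ≠ 2) (hf1 : f 1 = 1)
    (hfmul : ∀ m n, f (m * n) = f m * f n) (hfp : f p = 1)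
    (hfq : ∀ q : ℕ, q.Prime → q ≠ p → f q = legendreSym p q) (n : ℕ) :
    ∑ m ∈ Icc 1 n, f m = ∑ m ∈ Icc 1 (n / p), f m + ∑ m ∈ Icc 1 (n % p), f m := by
  have hmod : ∀ m ∈ Icc 1 (n % p), legendreSym p m = f m := fun m hm => by
    have hm := mem_Icc.mp hm
    have hlt : m < p := hm.2.trans_lt (Nat.mod_lt n (Fact.out : p.Prime).pos)
    exact (eq_legendreSym_of_not_dvd hf1 hfmul hfq (Nat.not_dvd_of_pos_of_lt hm.1 hlt)).symm
  calc ∑ m ∈ Icc 1 n, f m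
      = ∑ m ∈ Icc 1 n, legendreSym p m
          + ∑ m ∈ Icc 1 n, if p ∣ m then f (m / p) else 0 := by
        rw [← sum_add_distrib]
        exact sum_congr rfl fun m _ => eq_legendreSym_add_ite_dvd hf1 hfmul hfp hfq m
    _ = ∑ m ∈ Icc 1 (n % p), legendreSym p m + ∑ m ∈ Icc 1 (n / p), f m := by
        rw [legendreSym.sum_Icc_one_eq_sum_Icc_one_mod p hodd, sum_Icc_one_ite_dvd]
    _ = ∑ m ∈ Icc 1 (n / p), f m + ∑ m ∈ Icc 1 (n % p), f m := by
        rw [sum_congr rfl hmod, add_comm]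

end CompletelyMultiplicative

/-- If `n = a_0 + a_1 p + … + a_k p^k` in base `p`, then
`L_p(n) = ∑_j ∑_{l=1}^{a_j} λ_p(l)`. -/
theorem stmt_11 (p : ℕ) [Fact p.Prime] (hodd : p ≠ 2)
    (f : ℕ → ℤ) (hf1 : f 1 = 1) (hfmul : ∀ m n, f (m * n) = f m * f n)
    (hfp : f p = 1) (hfq : ∀ q : ℕ, q.Prime → q ≠ p → f q = legendreSym p q)
    (n : ℕ) :
    ∑ m ∈ Finset.Icc 1 n, f m
      = ((Nat.digits p n).map fun a => ∑ l ∈ Finset.Icc 1 a, f l).sum :=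
  Nat.eq_sum_map_digits_of_eq_div_add_mod (L := fun n => ∑ m ∈ Finset.Icc 1 n, f m)
    (Fact.out : p.Prime).one_lt (by simp)
    (sum_Icc_one_eq_sum_div_add_sum_mod hodd hf1 hfmul hfp hfq) n
end

section
/- L_5(n) equals the number of digits equal to 1 minus the number of digits equal to 3 in the base-5 expansion of n; consequently |L_5(n)| ≤ ⌊log_5 n⌋ + 1 for all n ≥ 1. -/
/-!
Off the multiples of 5, `λ_5` is the Legendre symbol `(·/5)`, and `λ_5(5k) = λ_5(k)`. Since
`(·/5)` sums to zero over a period, `L_5(5q + r) = L_5(q) + ∑_{j ≤ r} (j/5)` for `r < 5`, and these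
partial sums are `0, 1, 0, -1, 0` for `r = 0, …, 4`. Peeling off base-5 digits one at a time gives
the digit formula, and the bound follows because `n` has `⌊log_5 n⌋ + 1` digits.
-/

open Finset

theorem apply_eq_legendreSym_of_not_dvd (p : ℕ) [Fact p.Prime] (f : ℕ → ℤ) (hf1 : f 1 = 1)
    (hfmul : ∀ m n, f (m * n) = f m * f n)
    (hfq : ∀ q : ℕ, q.Prime → q ≠ p → f q = legendreSym p q) (m : ℕ) (hm : ¬ p ∣ m) :
    f m = legendreSym p m := by
  induction m using Nat.recOnMul with
  | zero => exact absurd (dvd_zero p) hm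
  | one => rw [hf1, Nat.cast_one, legendreSym.at_one]
  | prime q hq => exact hfq q hq (by rintro rfl; exact hm dvd_rfl)
  | mul a b iha ihb =>
    rw [hfmul, iha (fun h => hm (h.mul_right b)), ihb (fun h => hm (h.mul_left a)), Nat.cast_mul,
      legendreSym.mul]

theorem legendreSym_mul_add (p : ℕ) [Fact p.Prime] (k j : ℕ) :
    legendreSym p ((p * k + j : ℕ) : ℤ) = legendreSym p j := by
  rw [legendreSym.mod, eq_comm, legendreSym.mod]
  push_cast
  rw [add_comm, Int.add_mul_emod_self_left]

section DigitSums

variable {b : ℕ} {f c : ℕ → ℤ}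

theorem sum_Icc_mul_add (hfc : ∀ k j, 0 < j → j < b → f (b * k + j) = c j) (q : ℕ) {r : ℕ}
    (hr : r < b) :
    ∑ m ∈ Icc 1 (b * q + r), f m = ∑ m ∈ Icc 1 (b * q), f m + ∑ j ∈ Icc 1 r, c j := by
  induction r with
  | zero => simp
  | succ r ih =>
    rw [← add_assoc, sum_Icc_succ_top (by omega), sum_Icc_succ_top (by omega), ih (by omega),
      add_assoc (b * q), hfc q (r + 1) (by omega) hr, add_assoc]

theorem sum_Icc_mul (hb : 0 < b) (hfb : ∀ k, f (b * k) = f k)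
    (hfc : ∀ k j, 0 < j → j < b → f (b * k + j) = c j) (hc : ∑ j ∈ Icc 1 (b - 1), c j = 0)
    (q : ℕ) : ∑ m ∈ Icc 1 (b * q), f m = ∑ m ∈ Icc 1 q, f m := by
  induction q with
  | zero => simp
  | succ q ih =>
    have hsplit : b * (q + 1) = b * q + (b - 1) + 1 := by rw [mul_add]; omega
    rw [hsplit, sum_Icc_succ_top (by omega), sum_Icc_mul_add hfc q (by omega), hc, ih, add_zero,
      ← hsplit, hfb, sum_Icc_succ_top (by omega)]

theorem sum_Icc_eq_sum_digits (hb : 1 < b) (hfb : ∀ k, f (b * k) = f k)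
    (hfc : ∀ k j, 0 < j → j < b → f (b * k + j) = c j) (hc : ∑ j ∈ Icc 1 (b - 1), c j = 0)
    (n : ℕ) : ∑ m ∈ Icc 1 n, f m = ((Nat.digits b n).map fun d => ∑ j ∈ Icc 1 d, c j).sum := by
  induction n using Nat.strong_induction_on with
  | _ n ih =>
    rcases Nat.eq_zero_or_pos n with rfl | hn
    · simp
    · conv_lhs => rw [← Nat.div_add_mod n b]
      rw [Nat.digits_eq_cons_digits_div hb hn.ne', List.map_cons, List.sum_cons,
        sum_Icc_mul_add hfc _ (Nat.mod_lt n (by omega)), sum_Icc_mul (by omega) hfb hfc hc,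
        ih _ (Nat.div_lt_self hn hb), add_comm]

end DigitSums

theorem sum_Icc_legendreSym_five [Fact (Nat.Prime 5)] :
    ∑ j ∈ Icc 1 (5 - 1), legendreSym 5 (j : ℕ) = 0 := by
  decide +revert

theorem sum_Icc_legendreSym_five_of_lt [Fact (Nat.Prime 5)] {d : ℕ} (hd : d < 5) :
    ∑ j ∈ Icc 1 d, legendreSym 5 (j : ℕ) = (if d = 1 then 1 else 0) - if d = 3 then 1 else 0 := by
  revert d
  decide +revert

theorem List.sum_map_ite_sub_ite {α : Type*} [DecidableEq α] (l : List α) (a a' : α) :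
    (l.map fun x => (if x = a then (1 : ℤ) else 0) - if x = a' then 1 else 0).sum =
      l.count a - l.count a' := by
  induction l with
  | nil => simp
  | cons x l ih =>
    simp only [List.map_cons, List.sum_cons, ih, List.count_cons, beq_iff_eq]
    split_ifs <;> push_cast <;> ring

theorem List.abs_count_sub_count_le_length {α : Type*} [BEq α] [LawfulBEq α] {a a' : α}
    (h : a ≠ a') (l : List α) : |(l.count a : ℤ) - l.count a'| ≤ l.length := by
  have hle : l.count a + l.count a' ≤ l.length := by
    induction l with
    | nil => simp
    | cons x l ih =>
      simp only [List.count_cons, List.length_cons, beq_iff_eq]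
      split_ifs <;> grind
  rw [abs_sub_le_iff]
  constructor <;> linarith [(by exact_mod_cast hle : (l.count a : ℤ) + l.count a' ≤ l.length)]

/-- `L_5(n)` equals the number of `1`s minus the number of `3`s in the base-`5`
expansion of `n`; consequently `|L_5(n)| ≤ ⌊log_5 n⌋ + 1` for `n ≥ 1`. -/
theorem stmt_14 [Fact (Nat.Prime 5)]
    (f : ℕ → ℤ) (hf1 : f 1 = 1) (hfmul : ∀ m n, f (m * n) = f m * f n)
    (hfp : f 5 = 1) (hfq : ∀ q : ℕ, q.Prime → q ≠ 5 → f q = legendreSym 5 q) :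
    (∀ n : ℕ, ∑ m ∈ Finset.Icc 1 n, f m
        = ((Nat.digits 5 n).count 1 : ℤ) - ((Nat.digits 5 n).count 3 : ℤ)) ∧
      ∀ n : ℕ, 1 ≤ n →
        |∑ m ∈ Finset.Icc 1 n, f m| ≤ (Nat.log 5 n : ℤ) + 1 := by
  have hfb (k : ℕ) : f (5 * k) = f k := by rw [hfmul, hfp, one_mul]
  have hfc (k j : ℕ) (hj0 : 0 < j) (hj5 : j < 5) : f (5 * k + j) = legendreSym 5 (j : ℕ) := by
    rw [apply_eq_legendreSym_of_not_dvd 5 f hf1 hfmul hfq _ (by omega), legendreSym_mul_add]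
  have hdigits (n : ℕ) : ∑ m ∈ Icc 1 n, f m
      = ((Nat.digits 5 n).count 1 : ℤ) - ((Nat.digits 5 n).count 3 : ℤ) := by
    rw [sum_Icc_eq_sum_digits (by norm_num) hfb hfc sum_Icc_legendreSym_five n,
      List.map_congr_left fun d hd =>
        sum_Icc_legendreSym_five_of_lt (Nat.digits_lt_base (by norm_num) hd),
      List.sum_map_ite_sub_ite]
  refine ⟨hdigits, fun n hn => ?_⟩
  rw [hdigits]
  have hbound := List.abs_count_sub_count_le_length (by norm_num : 1 ≠ 3) (Nat.digits 5 n)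
  rw [Nat.length_digits 5 n (by norm_num) (by omega)] at hbound
  exact_mod_cast hbound
end
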